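/- Let S ⊆ ℤ^k be finite nonempty with nondominated set N, and fix U ∈ ℤ^k. Suppose every element of N satisfies v_i ≤ U_i for all i < k. Then the map sending each nondominated (k−1)-vector u of the projected set π(S_U) (where S_U = {v ∈ S : v_i ≤ U_i ∀i} and π projects to the first k−1 coordinates) to the vector (u, min{ v_k : v ∈ S_U, v_i ≤ u_i for i < k }) produces a vector that is nondominated in S_U whenever the minimum is attained at a point v with π(v) = u. -/
import Mathlib


theorem stmt_19 (k : ℕ) (S : Finset (Fin (k + 1) → ℤ)) (hS : S.Nonempty)
    (U : Fin (k + 1) → ℤ)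
    (hNbound : ∀ v ∈ S, (¬ ∃ w ∈ S, (∀ i, w i ≤ v i) ∧ ∃ j, w j < v j) →
      ∀ i : Fin k, v i.castSucc ≤ U i.castSucc)
    (SU : Finset (Fin (k + 1) → ℤ)) (hSU : SU = S.filter (fun v => ∀ i, v i ≤ U i))
    (u : Fin k → ℤ)
    (humem : ∃ v ∈ SU, ∀ i : Fin k, v i.castSucc = u i)
    (hund : ¬ ∃ w ∈ SU, (∀ i : Fin k, w i.castSucc ≤ u i) ∧
      ∃ i : Fin k, w i.castSucc < u i)
    (mk : ℤ)
    (hmk : IsLeast {z : ℤ | ∃ v ∈ SU, (∀ i : Fin k, v i.castSucc ≤ u i) ∧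
      z = v (Fin.last k)} mk)
    (v : Fin (k + 1) → ℤ) (hv : v ∈ SU)
    (hvproj : ∀ i : Fin k, v i.castSucc = u i) (hvlast : v (Fin.last k) = mk) :
    ¬ ∃ w ∈ SU, (∀ i, w i ≤ v i) ∧ ∃ j, w j < v j := by
  rintro ⟨w, hw, hle, j, hj⟩
  have hwle : ∀ i : Fin k, w i.castSucc ≤ u i := fun i => (hvproj i) ▸ hle i.castSucc
  -- no strict improvement in first k coordinates
  have heq : ∀ i : Fin k, w i.castSucc = u i := by
    intro i
    by_contra h
    exact hund ⟨w, hw, hwle, i, lt_of_le_of_ne (hwle i) h⟩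
  -- w's last coordinate is in the set, so mk ≤ w last
  have hmem : w (Fin.last k) ∈ {z : ℤ | ∃ v ∈ SU, (∀ i : Fin k, v i.castSucc ≤ u i) ∧
      z = v (Fin.last k)} := ⟨w, hw, hwle, rfl⟩
  have hge : mk ≤ w (Fin.last k) := hmk.2 hmem
  -- the strict coordinate j must be the last one
  induction j using Fin.lastCases with
  | last =>
    rw [hvlast] at hj
    exact absurd hge (not_le.mpr hj)
  | cast i =>
    rw [hvproj i, heq i] at hj
    exact lt_irrefl _ hj
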